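/- arXiv:2101.04714 — 4 statements merged into one kernel-verified Lean document; each statement's English description precedes it below -/
import Mathlib

section
/- For n > m, the number of plane trees on n edges with exactly m internal nodes equals C(n-1, m) * M_{n-m-1}, where M_j = sum over k from 0 to floor(j/2) of C(j, 2k) * C_k is the j-th Motzkin number and C_k is the k-th Catalan number. -/
inductive PlaneTree : Type
  | node : List PlaneTree → PlaneTree

namespace PlaneTree

def edges : PlaneTree → ℕ
  | node ts => (ts.attach.map (fun t => edges t.1)).sum + ts.length
decreasing_by have := List.sizeOf_lt_of_mem t.2; simp [PlaneTree.node.sizeOf_spec]; omega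

def leafAux : PlaneTree → ℕ
  | node ts => (if ts.length = 0 then 1 else 0) + (ts.attach.map (fun t => leafAux t.1)).sum
decreasing_by have := List.sizeOf_lt_of_mem t.2; simp [PlaneTree.node.sizeOf_spec]; omega

def internalAux : PlaneTree → ℕ
  | node ts => (if ts.length = 1 then 1 else 0) + (ts.attach.map (fun t => internalAux t.1)).sum
decreasing_by have := List.sizeOf_lt_of_mem t.2; simp [PlaneTree.node.sizeOf_spec]; omega

/-- number of leaves: non-root vertices of down degree 0 -/
def leaves : PlaneTree → ℕ
  | node ts => (ts.map leafAux).sum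

/-- number of internal nodes: non-root vertices of down degree 1 -/
def internals : PlaneTree → ℕ
  | node ts => (ts.map internalAux).sum

def rootDegree : PlaneTree → ℕ
  | node ts => ts.length

end PlaneTree

/-- The `j`-th Motzkin number. -/
def motzkin (j : ℕ) : ℕ :=
  ∑ k ∈ Finset.range (j / 2 + 1), Nat.choose j (2 * k) * catalan k

/-!
Write `n = m + k + 1`. Splitting off the leftmost subtree `t` of the root turns a tree into a
pair `(t, T)`; the root of `t` becomes an ordinary vertex, internal exactly when `t` has root
degree one. Grading trees by `(edges - internals, internals)` and, for each first coordinate `k`,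
taking the series `P k` in a variable `X` marking internal nodes, this decomposition reads
`P (k + 1) = ∑_{i + j = k} Q i * P j`, where `Q` counts with the root of `t` already counted as
internal; separating trees whose root has degree one gives `(1 - X) Q k = P k - Q (k - 1)`,
with `Q (-1) = 0`.
These relations determine every series from `P 0 = 1`, and they are solved by
`P k = M_{k-1} (1 - X)⁻ᵏ` for `k ≥ 1` and `Q k = R_k (1 - X)⁻⁽ᵏ⁺¹⁾` with the Riordan numbers
`R_{k+1} = M_k - R_k`: the verification is the generating-function identity `M = R (1 + x M)`,
a consequence of the Motzkin equation `M = 1 + x M + x² M²`, which in turn follows from the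
binomial–Catalan formula by an upper Vandermonde convolution. The coefficient of `X ^ m` in
`M_k (1 - X)⁻⁽ᵏ⁺¹⁾` is `C(k + m, m) M_k = C(n - 1, m) M_{n-m-1}`.
-/

open Finset PowerSeries

section FiberCount

variable {α β M : Type*} [Add M] (f : α → M) (g : β → M) {c : M} (s : Finset (M × M))

def fiberAddEquiv (hs : ∀ ab, ab ∈ s ↔ ab.1 + ab.2 = c) :
    {p : α × β // f p.1 + g p.2 = c} ≃ Σ ab : s, {x // f x = ab.1.1} × {y // g y = ab.1.2} where
  toFun p := ⟨⟨(f p.1.1, g p.1.2), (hs _).2 p.2⟩, ⟨p.1.1, rfl⟩, ⟨p.1.2, rfl⟩⟩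
  invFun q := ⟨(q.2.1, q.2.2), by rw [q.2.1.2, q.2.2.2]; exact (hs _).1 q.1.2⟩
  left_inv _ := rfl
  right_inv := by
    rintro ⟨⟨⟨a, b⟩, hab⟩, ⟨x, hx⟩, ⟨y, hy⟩⟩
    dsimp only at hx hy
    subst hx hy
    rfl

lemma finite_subtype_add_eq (hs : ∀ ab, ab ∈ s ↔ ab.1 + ab.2 = c)
    (hf : ∀ ab ∈ s, Finite {x // f x = ab.1}) (hg : ∀ ab ∈ s, Finite {y // g y = ab.2}) :
    Finite {p : α × β // f p.1 + g p.2 = c} :=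
  have (ab : s) : Finite ({x // f x = ab.1.1} × {y // g y = ab.1.2}) :=
    have := hf _ ab.2; have := hg _ ab.2; inferInstance
  .of_equiv _ (fiberAddEquiv f g s hs).symm

lemma card_subtype_add_eq_sum [∀ a, Finite {x // f x = a}] [∀ b, Finite {y // g y = b}]
    (hs : ∀ ab, ab ∈ s ↔ ab.1 + ab.2 = c) :
    Nat.card {p : α × β // f p.1 + g p.2 = c} =
      ∑ ab ∈ s, Nat.card {x // f x = ab.1} * Nat.card {y // g y = ab.2} := by
  rw [Nat.card_congr (fiberAddEquiv f g s hs), Nat.card_sigma]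
  simp_rw [Nat.card_prod]
  exact s.sum_coe_sort fun ab => Nat.card {x // f x = ab.1} * Nat.card {y // g y = ab.2}

end FiberCount

lemma mk_choose_eq_X_pow_mul (p : ℕ) :
    (PowerSeries.mk fun n => (n.choose p : ℤ)) = X ^ p * PowerSeries.mk 1 ^ (p + 1) := by
  ext n
  rw [mk_one_pow_eq_mk_choose_add, coeff_X_pow_mul', coeff_mk, coeff_mk]
  split_ifs with h
  · rw [Nat.add_sub_cancel' h]
  · rw [Nat.choose_eq_zero_of_lt (by omega), Nat.cast_zero]

theorem sum_antidiagonal_choose_mul_choose (p q n : ℕ) :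
    ∑ ij ∈ antidiagonal n, ij.1.choose p * ij.2.choose q = (n + 1).choose (p + q + 1) := by
  have key : X * ((PowerSeries.mk fun n => (n.choose p : ℤ)) *
      PowerSeries.mk fun n => (n.choose q : ℤ)) =
        PowerSeries.mk fun n => (n.choose (p + q + 1) : ℤ) := by
    rw [mk_choose_eq_X_pow_mul, mk_choose_eq_X_pow_mul, mk_choose_eq_X_pow_mul]
    ring
  have := congrArg (coeff (n + 1)) key
  rw [coeff_succ_X_mul, coeff_mul] at this
  simp only [coeff_mk] at this
  exact_mod_cast this

lemma sum_range_sum_range_eq_sum_antidiagonal {R : Type*} [CommSemiring R] {N : ℕ}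
    (f g h : ℕ → R) (hh : ∀ s, N ≤ s → h s = 0) :
    ∑ k ∈ range N, ∑ l ∈ range N, f k * g l * h (k + l) =
      ∑ s ∈ range N, (∑ p ∈ antidiagonal s, f p.1 * g p.2) * h s := by
  calc ∑ k ∈ range N, ∑ l ∈ range N, f k * g l * h (k + l)
      = ∑ k ∈ range N, ∑ l ∈ range (N - k), f k * g l * h (k + l) := by
        refine sum_congr rfl fun k hk => (sum_subset ?_ fun l _ hl => ?_).symm
        · exact range_subset_range.2 (Nat.sub_le N k)
        · rw [hh _ (by simp at hl; omega), mul_zero]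
    _ = ∑ s ∈ range N, ∑ k ∈ range (s + 1), f k * g (s - k) * h (k + (s - k)) :=
        (sum_range_diag_flip N fun k l => f k * g l * h (k + l)).symm
    _ = ∑ s ∈ range N, (∑ p ∈ antidiagonal s, f p.1 * g p.2) * h s := by
        refine sum_congr rfl fun s _ => ?_
        rw [Nat.sum_antidiagonal_eq_sum_range_succ (fun a b => f a * g b), sum_mul]
        refine sum_congr rfl fun k hk => ?_
        rw [Nat.add_sub_cancel' (by simpa [Nat.lt_succ_iff] using hk)]

lemma motzkin_eq_sum_range {j N : ℕ} (h : j / 2 < N) :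
    motzkin j = ∑ k ∈ range N, j.choose (2 * k) * catalan k := by
  refine sum_subset (range_subset_range.2 h) fun k _ hk => ?_
  rw [Nat.choose_eq_zero_of_lt (by simp at hk; omega), zero_mul]

lemma motzkin_succ (j : ℕ) :
    motzkin (j + 1) =
      motzkin j + ∑ k ∈ range (j + 1), j.choose (2 * k + 1) * catalan (k + 1) := by
  rw [motzkin_eq_sum_range (N := j + 2) (by omega), motzkin_eq_sum_range (N := j + 2) (by omega),
    sum_range_succ' _ (j + 1), sum_range_succ' (fun k => j.choose (2 * k) * catalan k) (j + 1)]
  have hpascal (k : ℕ) :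
      (j + 1).choose (2 * (k + 1)) = j.choose (2 * k + 1) + j.choose (2 * (k + 1)) :=
    Nat.choose_succ_succ' j (2 * k + 1)
  simp only [hpascal, add_mul, sum_add_distrib, Nat.mul_zero, Nat.choose_zero_right]
  ring

lemma sum_antidiagonal_motzkin_mul (j : ℕ) :
    ∑ p ∈ antidiagonal j, motzkin p.1 * motzkin p.2 =
      ∑ s ∈ range (j + 2), (j + 1).choose (2 * s + 1) * catalan (s + 1) := by
  have hM : ∀ p ∈ antidiagonal j, motzkin p.1 * motzkin p.2 =
      ∑ k ∈ range (j + 2), ∑ l ∈ range (j + 2),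
        catalan k * catalan l * (p.1.choose (2 * k) * p.2.choose (2 * l)) := by
    intro p hp
    have := mem_antidiagonal.1 hp
    rw [motzkin_eq_sum_range (N := j + 2) (by omega), motzkin_eq_sum_range (N := j + 2) (by omega),
      sum_mul_sum]
    exact sum_congr rfl fun k _ => sum_congr rfl fun l _ => by ring
  rw [sum_congr rfl hM, sum_comm]
  simp_rw [sum_comm (s := antidiagonal j), ← mul_sum, sum_antidiagonal_choose_mul_choose,
    show ∀ k l, 2 * k + 2 * l + 1 = 2 * (k + l) + 1 by intros; ring]
  rw [sum_range_sum_range_eq_sum_antidiagonal catalan catalan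
    (fun s => (j + 1).choose (2 * s + 1)) fun s hs => Nat.choose_eq_zero_of_lt (by omega)]
  simp_rw [← catalan_succ', mul_comm]

theorem motzkin_succ_succ (j : ℕ) :
    motzkin (j + 2) = motzkin (j + 1) + ∑ p ∈ antidiagonal j, motzkin p.1 * motzkin p.2 := by
  rw [motzkin_succ (j + 1), sum_antidiagonal_motzkin_mul]

noncomputable def motzkinSeries : ℤ⟦X⟧ := PowerSeries.mk fun j => (motzkin j : ℤ)

theorem motzkinSeries_eq :
    motzkinSeries = 1 + X * motzkinSeries + X ^ 2 * motzkinSeries ^ 2 := by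
  ext (_ | _ | j)
  · simp [motzkinSeries, motzkin]
  · simp [motzkinSeries, motzkin, coeff_X_pow_mul']
  · rw [map_add, map_add, coeff_succ_X_mul, coeff_X_pow_mul', if_pos (by omega), sq, coeff_mul]
    simp [motzkinSeries, motzkin_succ_succ]

def riordan : ℕ → ℤ
  | 0 => 1
  | k + 1 => motzkin k - riordan k

lemma one_add_X_mul_riordan :
    (1 + X) * PowerSeries.mk riordan = 1 + X * motzkinSeries := by
  ext (_ | k)
  · simp [riordan]
  · simp [add_mul, coeff_succ_X_mul, motzkinSeries, riordan]

theorem motzkinSeries_eq_riordan_mul :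
    motzkinSeries = PowerSeries.mk riordan * (1 + X * motzkinSeries) := by
  have h : (1 + X : ℤ⟦X⟧) ≠ 0 := fun h => by simpa using congrArg constantCoeff h
  refine mul_left_cancel₀ h ?_
  linear_combination motzkinSeries_eq - (1 + X * motzkinSeries) * one_add_X_mul_riordan

namespace PlaneTree

@[simp]
lemma edges_node (ts : List PlaneTree) : (node ts).edges = (ts.map edges).sum + ts.length := by
  simp [edges]

@[simp]
lemma internals_node (ts : List PlaneTree) : (node ts).internals = (ts.map internalAux).sum := by
  rw [internals]

@[simp]
lemma rootDegree_node (ts : List PlaneTree) : (node ts).rootDegree = ts.length := rfl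

lemma internalAux_eq (T : PlaneTree) :
    T.internalAux = T.internals + if T.rootDegree = 1 then 1 else 0 := by
  obtain ⟨ts⟩ := T
  rw [internalAux, internals, rootDegree, add_comm]
  simp

def graft (t : PlaneTree) : PlaneTree → PlaneTree
  | node ts => node (t :: ts)

def ungraft : PlaneTree → PlaneTree × PlaneTree
  | node [] => (node [], node [])
  | node (t :: ts) => (t, node ts)

@[simp]
lemma edges_graft (t T : PlaneTree) : (graft t T).edges = t.edges + T.edges + 1 := by
  obtain ⟨ts⟩ := T
  simp [graft]
  ring

@[simp]
lemma internals_graft (t T : PlaneTree) :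
    (graft t T).internals = t.internalAux + T.internals := by
  obtain ⟨ts⟩ := T
  simp [graft]

@[simp]
lemma rootDegree_graft (t T : PlaneTree) : (graft t T).rootDegree = T.rootDegree + 1 := by
  obtain ⟨ts⟩ := T
  rfl

lemma ungraft_graft (t T : PlaneTree) : ungraft (graft t T) = (t, T) := by
  obtain ⟨ts⟩ := T
  rfl

lemma graft_ungraft {T : PlaneTree} (h : T.rootDegree ≠ 0) :
    graft (ungraft T).1 (ungraft T).2 = T := by
  obtain ⟨_ | ⟨t, ts⟩⟩ := T
  · exact absurd rfl h
  · rfl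

lemma node_singleton_ungraft_fst {T : PlaneTree} (h : T.rootDegree = 1) :
    node [(ungraft T).1] = T := by
  obtain ⟨_ | ⟨t, _ | _⟩⟩ := T <;> simp [ungraft] at h ⊢

lemma rootDegree_ne_zero_of_edges_ne_zero {T : PlaneTree} (h : T.edges ≠ 0) :
    T.rootDegree ≠ 0 := by
  obtain ⟨_ | _⟩ := T <;> simp at h ⊢

@[elab_as_elim]
theorem graft_induction {motive : PlaneTree → Prop} (nil : motive (node []))
    (graft : ∀ t T, motive t → motive T → motive (graft t T)) : ∀ T, motive T
  | node [] => nil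
  | node (t :: ts) => graft t (node ts) (graft_induction nil graft t)
      (graft_induction nil graft (node ts))
decreasing_by all_goals simp_wf <;> omega

lemma internals_add_rootDegree_le (T : PlaneTree) : T.internals + T.rootDegree ≤ T.edges := by
  induction T using graft_induction with
  | nil => simp
  | graft t T ht hT =>
    have := internalAux_eq t
    simp only [internals_graft, rootDegree_graft, edges_graft]
    split_ifs at this <;> omega

lemma internalAux_le_edges (T : PlaneTree) : T.internalAux ≤ T.edges := by
  have := internals_add_rootDegree_le T
  rw [internalAux_eq]
  split_ifs <;> omega

lemma eq_nil_of_edges_le_internals {T : PlaneTree} (h : T.edges ≤ T.internals) :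
    T = node [] := by
  obtain ⟨_ | ⟨t, ts⟩⟩ := T
  · rfl
  · have := internals_add_rootDegree_le (node (t :: ts))
    simp at this h
    omega

def graftEquiv : PlaneTree × PlaneTree ≃ {T : PlaneTree // T.rootDegree ≠ 0} where
  toFun p := ⟨graft p.1 p.2, by simp⟩
  invFun T := ungraft T
  left_inv p := ungraft_graft p.1 p.2
  right_inv T := Subtype.ext (graft_ungraft T.2)

def graftFiberEquiv (S : PlaneTree → Prop) (hS : ∀ T, S T → T.rootDegree ≠ 0) :
    {p : PlaneTree × PlaneTree // S (graft p.1 p.2)} ≃ {T // S T} :=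
  (graftEquiv.subtypeEquiv fun _ => Iff.rfl).trans (Equiv.subtypeSubtypeEquivSubtype (hS _ ·))

instance finite_edges_eq (n : ℕ) : Finite {T : PlaneTree // T.edges = n} := by
  induction n using Nat.strong_induction_on with
  | _ n ih =>
    cases n with
    | zero =>
      have : Subsingleton {T : PlaneTree // T.edges = 0} :=
        ⟨fun T T' => Subtype.ext <| by
          rw [eq_nil_of_edges_le_internals (by omega : T.1.edges ≤ _),
            eq_nil_of_edges_le_internals (by omega : T'.1.edges ≤ _)]⟩
      infer_instance
    | succ n =>
      have := finite_subtype_add_eq edges edges (c := n) _ (fun _ => mem_antidiagonal)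
        (fun ab hab => ih _ (by have := mem_antidiagonal.1 hab; omega))
        (fun ab hab => ih _ (by have := mem_antidiagonal.1 hab; omega))
      exact .of_equiv {p : PlaneTree × PlaneTree // p.1.edges + p.2.edges = n} <|
        (Equiv.subtypeEquivRight fun p => by simp).trans <|
          graftFiberEquiv (·.edges = n + 1) fun T hT =>
            rootDegree_ne_zero_of_edges_ne_zero (by omega)

lemma finite_of_edges_eq {S : PlaneTree → Prop} {n : ℕ} (h : ∀ T, S T → T.edges = n) :
    Finite {T // S T} :=
  .of_injective (fun T => (⟨T.1, h _ T.2⟩ : {T : PlaneTree // T.edges = n}))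
    fun _ _ hT => Subtype.ext (Subtype.mk.inj hT)

lemma card_eq_card_nonunary_add_card_singleton (S : PlaneTree → Prop) [Finite {T // S T}] :
    Nat.card {T // S T} =
      Nat.card {T // S T ∧ T.rootDegree ≠ 1} + Nat.card {t // S (node [t])} := by
  classical
  rw [← Nat.card_congr (Equiv.sumCompl fun T : {T // S T} => T.1.rootDegree ≠ 1), Nat.card_sum]
  congr 1
  · exact Nat.card_congr (Equiv.subtypeSubtypeEquivSubtypeInter S (·.rootDegree ≠ 1))
  · refine Nat.card_congr ((Equiv.subtypeSubtypeEquivSubtypeInter S (¬·.rootDegree ≠ 1)).trans ?_)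
    exact {
      toFun T := ⟨(ungraft T.1).1, by rw [node_singleton_ungraft_fst (not_not.1 T.2.2)]; exact T.2.1⟩
      invFun t := ⟨node [t.1], t.2, by simp⟩
      left_inv T := Subtype.ext (node_singleton_ungraft_fst (not_not.1 T.2.2))
      right_inv t := rfl }

/-- Grading by `edges - internals` rather than by `edges` is what makes the generating series
in the number of internal nodes factor as `M_{k-1} (1 - X)⁻ᵏ`. -/
def weight (T : PlaneTree) : ℕ × ℕ := (T.edges - T.internals, T.internals)

/-- The grading a tree contributes once it is grafted below a new root, where its own root
becomes a non-root vertex. -/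
def weightAux (T : PlaneTree) : ℕ × ℕ := (T.edges - T.internalAux, T.internalAux)

lemma edges_eq_weight (T : PlaneTree) : T.edges = T.weight.1 + T.weight.2 := by
  have := internals_add_rootDegree_le T
  simp only [weight]
  omega

lemma edges_eq_weightAux (T : PlaneTree) : T.edges = T.weightAux.1 + T.weightAux.2 := by
  have := internalAux_le_edges T
  simp only [weightAux]
  omega

lemma weight_graft (t T : PlaneTree) :
    (graft t T).weight = t.weightAux + T.weight + (1, 0) := by
  have := internalAux_le_edges t
  have := internals_add_rootDegree_le T
  simp only [weight, weightAux, edges_graft, internals_graft, Prod.mk_add_mk, Prod.mk.injEq]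
  omega

lemma weight_singleton (t : PlaneTree) : (node [t]).weight = t.weightAux + (1, 0) := by
  have := internalAux_le_edges t
  simp only [weight, weightAux, edges_node, internals_node, Prod.mk_add_mk, Prod.mk.injEq]
  simp
  omega

lemma weightAux_singleton (t : PlaneTree) : (node [t]).weightAux = t.weightAux + (0, 1) := by
  simp only [weightAux, internalAux_eq (node [t]), internals_node, rootDegree_node]
  simp

lemma weightAux_of_rootDegree_ne_one {T : PlaneTree} (h : T.rootDegree ≠ 1) :
    T.weightAux = T.weight := by
  simp [weightAux, weight, internalAux_eq, h]

lemma weight_eq_zero_fst_iff {T : PlaneTree} {m : ℕ} :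
    T.weight = (0, m) ↔ T = node [] ∧ m = 0 := by
  constructor
  · intro h
    have hT := eq_nil_of_edges_le_internals (T := T) (by simp [weight, Prod.ext_iff] at h; omega)
    subst hT
    simp [weight] at h
    simp [h]
  · rintro ⟨rfl, rfl⟩
    simp [weight]

instance (w : ℕ × ℕ) : Finite {T : PlaneTree // T.weight = w} :=
  finite_of_edges_eq fun T h => by rw [edges_eq_weight, h]

instance (w : ℕ × ℕ) : Finite {T : PlaneTree // T.weightAux = w} :=
  finite_of_edges_eq fun T h => by rw [edges_eq_weightAux, h]

noncomputable def weightSeries (k : ℕ) : ℤ⟦X⟧ :=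
  PowerSeries.mk fun m => Nat.card {T : PlaneTree // T.weight = (k, m)}

noncomputable def weightAuxSeries (k : ℕ) : ℤ⟦X⟧ :=
  PowerSeries.mk fun m => Nat.card {T : PlaneTree // T.weightAux = (k, m)}

noncomputable def nonunaryWeightSeries (k : ℕ) : ℤ⟦X⟧ :=
  PowerSeries.mk fun m => Nat.card {T : PlaneTree // T.weight = (k, m) ∧ T.rootDegree ≠ 1}

lemma mk_card_eq_one_of_iff {S : ℕ → PlaneTree → Prop}
    (h : ∀ m T, S m T ↔ T = node [] ∧ m = 0) :
    (PowerSeries.mk fun m => (Nat.card {T // S m T} : ℤ)) = 1 := by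
  ext m
  simp only [h, coeff_mk, coeff_one]
  split_ifs with hm <;> simp [hm]

lemma weightSeries_zero : weightSeries 0 = 1 :=
  mk_card_eq_one_of_iff fun _ _ => weight_eq_zero_fst_iff

lemma nonunaryWeightSeries_zero : nonunaryWeightSeries 0 = 1 :=
  mk_card_eq_one_of_iff fun _ _ => by
    rw [weight_eq_zero_fst_iff]
    exact and_iff_left_of_imp fun h => by simp [h.1]

lemma weightSeries_succ_eq (k : ℕ) :
    weightSeries (k + 1) = nonunaryWeightSeries (k + 1) + weightAuxSeries k := by
  ext m
  simp only [weightSeries, weightAuxSeries, nonunaryWeightSeries, coeff_mk, map_add]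
  rw [card_eq_card_nonunary_add_card_singleton, Nat.cast_add]
  congr 2
  exact Nat.card_congr <| Equiv.subtypeEquivRight fun t => by
    simp [weight_singleton, Prod.ext_iff]

lemma weightAuxSeries_eq (k : ℕ) :
    weightAuxSeries k = nonunaryWeightSeries k + X * weightAuxSeries k := by
  ext m
  simp only [weightAuxSeries, nonunaryWeightSeries, coeff_mk, map_add]
  rw [card_eq_card_nonunary_add_card_singleton, Nat.cast_add]
  congr 1
  · exact congrArg _ <| Nat.card_congr <| Equiv.subtypeEquivRight fun T =>
      and_congr_left fun h => by rw [weightAux_of_rootDegree_ne_one h]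
  · cases m with
    | zero => simp [weightAux_singleton, Prod.ext_iff]
    | succ m =>
      rw [coeff_succ_X_mul, coeff_mk]
      exact congrArg _ <| Nat.card_congr <| Equiv.subtypeEquivRight fun t => by
        simp [weightAux_singleton, Prod.ext_iff]

lemma weightSeries_succ (k : ℕ) :
    weightSeries (k + 1) = ∑ p ∈ antidiagonal k, weightAuxSeries p.1 * weightSeries p.2 := by
  ext m
  have e : {p : PlaneTree × PlaneTree // p.1.weightAux + p.2.weight = (k, m)} ≃
      {T : PlaneTree // T.weight = (k + 1, m)} :=
    (Equiv.subtypeEquivRight fun p => by simp [weight_graft, Prod.ext_iff]).trans <|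
      graftFiberEquiv _ fun T hT => rootDegree_ne_zero_of_edges_ne_zero <| by
        rw [edges_eq_weight, hT]
        omega
  let s := (antidiagonal k ×ˢ antidiagonal m).map (Equiv.prodProdProdComm ℕ ℕ ℕ ℕ).toEmbedding
  have hs (ab : (ℕ × ℕ) × (ℕ × ℕ)) : ab ∈ s ↔ ab.1 + ab.2 = (k, m) := by
    simp [s, Finset.mem_map_equiv, Prod.ext_iff]
  simp only [weightSeries, weightAuxSeries, coeff_mk, map_sum, coeff_mul]
  rw [← Nat.card_congr e, card_subtype_add_eq_sum _ _ s hs, sum_map, sum_product]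
  push_cast
  rfl

theorem weightSeries_eq_and_weightAuxSeries_eq (k : ℕ) :
    weightSeries k = C (coeff k (1 + X * motzkinSeries)) * PowerSeries.mk 1 ^ k ∧
      weightAuxSeries k = C (riordan k) * PowerSeries.mk 1 ^ (k + 1) := by
  set u : ℤ⟦X⟧ := PowerSeries.mk 1
  have hQ (k : ℕ) : weightAuxSeries k = u * nonunaryWeightSeries k := by
    linear_combination (-weightAuxSeries k) * mk_one_mul_one_sub_eq_one ℤ +
      u * weightAuxSeries_eq k
  induction k using Nat.strong_induction_on with
  | _ k ih =>
  cases k with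
  | zero => exact ⟨by simp [weightSeries_zero], by simp [hQ, nonunaryWeightSeries_zero, riordan]⟩
  | succ k =>
    have hP : weightSeries (k + 1) = C (motzkin k : ℤ) * u ^ (k + 1) := by
      rw [weightSeries_succ]
      calc ∑ p ∈ antidiagonal k, weightAuxSeries p.1 * weightSeries p.2
          = ∑ p ∈ antidiagonal k,
              C (coeff p.1 (PowerSeries.mk riordan) * coeff p.2 (1 + X * motzkinSeries)) *
                u ^ (k + 1) := by
            refine sum_congr rfl fun p hp => ?_
            have hk := mem_antidiagonal.1 hp
            rw [(ih p.1 (by omega)).2, (ih p.2 (by omega)).1, ← hk, coeff_mk, map_mul]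
            ring
        _ = C (motzkin k : ℤ) * u ^ (k + 1) := by
            rw [← sum_mul, ← map_sum, ← coeff_mul, ← motzkinSeries_eq_riordan_mul]
            simp [motzkinSeries]
    refine ⟨by rw [hP]; simp [coeff_succ_X_mul, motzkinSeries], ?_⟩
    have hD : nonunaryWeightSeries (k + 1) = weightSeries (k + 1) - weightAuxSeries k := by
      rw [weightSeries_succ_eq]
      ring
    rw [hQ, hD, hP, (ih k (by omega)).2, riordan, map_sub]
    ring

end PlaneTree

/-- For `n > m`, the number of plane trees on `n` edges with exactly `m` internal
nodes equals `C(n-1,m) * M_{n-m-1}`. -/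
theorem planeTree_count_internals (n m : ℕ) (h : m < n) :
    Nat.card {T : PlaneTree // T.edges = n ∧ T.internals = m} =
      Nat.choose (n - 1) m * motzkin (n - m - 1) := by
  obtain ⟨k, rfl⟩ := Nat.exists_eq_add_of_lt h
  have hcard : Nat.card {T : PlaneTree // T.edges = m + k + 1 ∧ T.internals = m} =
      Nat.card {T : PlaneTree // T.weight = (k + 1, m)} :=
    Nat.card_congr <| Equiv.subtypeEquivRight fun T => by
      simp only [PlaneTree.weight, Prod.ext_iff]
      omega
  have hcoeff := congrArg (coeff m) (PlaneTree.weightSeries_eq_and_weightAuxSeries_eq (k + 1)).1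
  rw [PlaneTree.weightSeries, mk_one_pow_eq_mk_choose_add, coeff_C_mul] at hcoeff
  simp only [coeff_mk, map_add, coeff_one, coeff_succ_X_mul, motzkinSeries, Nat.add_one_ne_zero,
    if_false, zero_add] at hcoeff
  rw [hcard, show m + k + 1 - 1 = k + m by omega, show m + k + 1 - m - 1 = k by omega,
    ← Nat.choose_symm_add, mul_comm]
  exact_mod_cast hcoeff
end

section
/- Let a_1, a_2 be real numbers with min(a_1,a_2) > -1. Then for large n, the sum over pairs of positive integers n_1 + n_2 = n of n_1^{a_1} * n_2^{a_2} is Theta(n^{a_1 + a_2 + 1}), i.e., it is bounded above and below by positive constant multiples of n^{a_1+a_2+1}. -/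
/-!
Upper bound: in every term one of `i`, `n - i` is at least `n / 2`, so its power is at most a
constant times the same power of `n`, and the other factor sums to `O(n ^ (a + 1))` for `a > -1`
(for `a ≤ 0` by telescoping the tangent-line inequality of the concave map `x ↦ x ^ (a + 1)`).
Lower bound: each of the roughly `n / 4` terms with `n / 4 < i ≤ n / 2` is at least a constant
times `n ^ (a₁ + a₂)`.
-/

open Filter Finset

theorem mul_rpow_sub_one_mul_sub_le_rpow_sub_rpow {p x y : ℝ} (hp₀ : 0 ≤ p) (hp₁ : p ≤ 1)
    (hx : 0 < x) (hy : 0 ≤ y) : p * x ^ (p - 1) * (x - y) ≤ x ^ p - y ^ p := by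
  have hs : -1 ≤ y / x - 1 := by linarith [div_nonneg hy hx.le]
  have bernoulli := rpow_one_add_le_one_add_mul_self hs hp₀ hp₁
  rw [add_sub_cancel, Real.div_rpow hy hx.le, div_le_iff₀ (Real.rpow_pos_of_pos hx p)]
    at bernoulli
  have expand : (1 + p * (y / x - 1)) * x ^ p = x ^ p - p * (x ^ p / x) * (x - y) := by
    field_simp
    ring
  rw [Real.rpow_sub_one hx.ne']
  linarith

theorem sum_Icc_rpow_le_of_nonneg {a : ℝ} (ha : 0 ≤ a) (n : ℕ) :
    ∑ i ∈ Icc 1 n, (i : ℝ) ^ a ≤ (n : ℝ) ^ (a + 1) := by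
  calc ∑ i ∈ Icc 1 n, (i : ℝ) ^ a ≤ #(Icc 1 n) • (n : ℝ) ^ a :=
        sum_le_card_nsmul _ _ _ fun i hi ↦
          Real.rpow_le_rpow i.cast_nonneg (Nat.cast_le.mpr (mem_Icc.mp hi).2) ha
    _ = (n : ℝ) ^ (a + 1) := by
        rw [Nat.card_Icc, Nat.add_sub_cancel, nsmul_eq_mul,
          Real.rpow_add_one' n.cast_nonneg (by linarith), mul_comm]

theorem mul_sum_Icc_rpow_le_of_nonpos {a : ℝ} (ha₁ : -1 < a) (ha₀ : a ≤ 0) (n : ℕ) :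
    (a + 1) * ∑ i ∈ Icc 1 n, (i : ℝ) ^ a ≤ (n : ℝ) ^ (a + 1) := by
  induction n with
  | zero => simp [Real.zero_rpow (by linarith : a + 1 ≠ 0)]
  | succ n ih =>
    have step := mul_rpow_sub_one_mul_sub_le_rpow_sub_rpow (p := a + 1) (x := n + 1) (y := n)
      (by linarith) (by linarith) (by positivity) n.cast_nonneg
    rw [add_sub_cancel_right, add_sub_cancel_left, mul_one] at step
    rw [sum_Icc_succ_top (by omega), mul_add]
    push_cast
    linarith

theorem sum_Icc_rpow_le {a : ℝ} (ha : -1 < a) (n : ℕ) :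
    ∑ i ∈ Icc 1 n, (i : ℝ) ^ a ≤ max 1 (a + 1)⁻¹ * (n : ℝ) ^ (a + 1) := by
  have hpow : 0 ≤ (n : ℝ) ^ (a + 1) := by positivity
  rcases le_total 0 a with ha₀ | ha₀
  · calc _ ≤ (n : ℝ) ^ (a + 1) := sum_Icc_rpow_le_of_nonneg ha₀ n
      _ ≤ _ := le_mul_of_one_le_left hpow (le_max_left _ _)
  · calc _ ≤ (a + 1)⁻¹ * (n : ℝ) ^ (a + 1) := by
          rw [← div_eq_inv_mul, le_div_iff₀' (by linarith)]
          exact mul_sum_Icc_rpow_le_of_nonpos ha ha₀ n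
      _ ≤ _ := by gcongr; exact le_max_right _ _

theorem rpow_le_max_one_rpow_mul_rpow {a c x y : ℝ} (hc : 0 < c) (hy : 0 < y) (hcy : c * y ≤ x)
    (hxy : x ≤ y) : x ^ a ≤ max 1 (c ^ a) * y ^ a := by
  have hx : 0 < x := (mul_pos hc hy).trans_le hcy
  have hpow : 0 ≤ y ^ a := by positivity
  rcases le_total 0 a with ha | ha
  · calc x ^ a ≤ y ^ a := Real.rpow_le_rpow hx.le hxy ha
      _ ≤ _ := le_mul_of_one_le_left hpow (le_max_left _ _)
  · calc x ^ a ≤ (c * y) ^ a := Real.rpow_le_rpow_of_nonpos (by positivity) hcy ha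
      _ = c ^ a * y ^ a := Real.mul_rpow hc.le hy.le
      _ ≤ _ := by gcongr; exact le_max_right _ _

theorem min_one_rpow_mul_rpow_le_rpow {a c x y : ℝ} (hc : 0 < c) (hy : 0 < y) (hcy : c * y ≤ x)
    (hxy : x ≤ y) : min 1 (c ^ a) * y ^ a ≤ x ^ a := by
  have hx : 0 < x := (mul_pos hc hy).trans_le hcy
  have hpow : 0 ≤ y ^ a := by positivity
  rcases le_total 0 a with ha | ha
  · calc min 1 (c ^ a) * y ^ a ≤ c ^ a * y ^ a := by gcongr; exact min_le_right _ _
      _ = (c * y) ^ a := (Real.mul_rpow hc.le hy.le).symm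
      _ ≤ x ^ a := Real.rpow_le_rpow (by positivity) hcy ha
  · calc min 1 (c ^ a) * y ^ a ≤ y ^ a := mul_le_of_le_one_left hpow (min_le_left _ _)
      _ ≤ x ^ a := Real.rpow_le_rpow_of_nonpos hx hxy ha

theorem rpow_mul_rpow_le {a b x y : ℝ} (hx : 0 < x) (hy : 0 < y) :
    x ^ a * y ^ b ≤
      max 1 (2⁻¹ ^ b) * (x + y) ^ b * x ^ a + max 1 (2⁻¹ ^ a) * (x + y) ^ a * y ^ b := by
  rcases le_total x y with hxy | hyx
  · have hy' := rpow_le_max_one_rpow_mul_rpow (a := b) (c := 2⁻¹) (x := y) (y := x + y)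
      (by norm_num) (by linarith) (by linarith) (by linarith)
    calc x ^ a * y ^ b ≤ x ^ a * (max 1 (2⁻¹ ^ b) * (x + y) ^ b) := by gcongr
      _ = max 1 (2⁻¹ ^ b) * (x + y) ^ b * x ^ a := by ring
      _ ≤ _ := le_add_of_nonneg_right (by positivity)
  · have hx' := rpow_le_max_one_rpow_mul_rpow (a := a) (c := 2⁻¹) (x := x) (y := x + y)
      (by norm_num) (by linarith) (by linarith) (by linarith)
    calc x ^ a * y ^ b ≤ max 1 (2⁻¹ ^ a) * (x + y) ^ a * y ^ b := by gcongr
      _ ≤ _ := le_add_of_nonneg_left (by positivity)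

theorem exists_sum_rpow_mul_rpow_le {a b : ℝ} (ha : -1 < a) (hb : -1 < b) :
    ∃ C : ℝ, 0 < C ∧ ∀ n : ℕ, 0 < n →
      ∑ i ∈ Ico 1 n, (i : ℝ) ^ a * ((n - i : ℕ) : ℝ) ^ b ≤
        C * (n : ℝ) ^ (a + b + 1) := by
  set Ka := max 1 ((2 : ℝ)⁻¹ ^ a)
  set Kb := max 1 ((2 : ℝ)⁻¹ ^ b)
  refine ⟨Kb * max 1 (a + 1)⁻¹ + Ka * max 1 (b + 1)⁻¹, by positivity, fun n hn ↦ ?_⟩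
  have hnR : (0 : ℝ) < n := by exact_mod_cast hn
  have sum_Ico_le {e : ℝ} (he : -1 < e) :
      ∑ i ∈ Ico 1 n, (i : ℝ) ^ e ≤ max 1 (e + 1)⁻¹ * (n : ℝ) ^ (e + 1) :=
    (sum_le_sum_of_subset_of_nonneg Ico_subset_Icc_self fun _ _ _ ↦ by positivity).trans
      (sum_Icc_rpow_le he n)
  calc ∑ i ∈ Ico 1 n, (i : ℝ) ^ a * ((n - i : ℕ) : ℝ) ^ b
      ≤ ∑ i ∈ Ico 1 n,
          (Kb * (n : ℝ) ^ b * (i : ℝ) ^ a +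
            Ka * (n : ℝ) ^ a * ((n - i : ℕ) : ℝ) ^ b) := by
        refine sum_le_sum fun i hi ↦ ?_
        obtain ⟨hi₁, hin⟩ := mem_Ico.mp hi
        have hsum : (i : ℝ) + ((n - i : ℕ) : ℝ) = n := by
          rw [← Nat.cast_add, Nat.add_sub_cancel' hin.le]
        simpa only [hsum] using rpow_mul_rpow_le (a := a) (b := b)
          (x := i) (y := (n - i : ℕ)) (by positivity) (by simp; omega)
    _ = Kb * (n : ℝ) ^ b * ∑ i ∈ Ico 1 n, (i : ℝ) ^ a
          + Ka * (n : ℝ) ^ a * ∑ i ∈ Ico 1 n, (i : ℝ) ^ b := by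
        rw [sum_add_distrib, ← mul_sum, ← mul_sum,
          sum_Ico_reflect (fun j ↦ (j : ℝ) ^ b) 1 (Nat.le_succ n), Nat.add_sub_cancel_left,
          Nat.add_sub_cancel]
    _ ≤ Kb * (n : ℝ) ^ b * (max 1 (a + 1)⁻¹ * (n : ℝ) ^ (a + 1))
          + Ka * (n : ℝ) ^ a * (max 1 (b + 1)⁻¹ * (n : ℝ) ^ (b + 1)) := by
        gcongr
        exacts [sum_Ico_le ha, sum_Ico_le hb]
    _ = _ := by
        have hab : (n : ℝ) ^ b * (n : ℝ) ^ (a + 1) = (n : ℝ) ^ (a + b + 1) := by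
          rw [← Real.rpow_add hnR]; ring_nf
        have hba : (n : ℝ) ^ a * (n : ℝ) ^ (b + 1) = (n : ℝ) ^ (a + b + 1) := by
          rw [← Real.rpow_add hnR]; ring_nf
        linear_combination (Kb * max 1 (a + 1)⁻¹) * hab + (Ka * max 1 (b + 1)⁻¹) * hba

theorem exists_le_sum_rpow_mul_rpow (a b : ℝ) :
    ∃ c : ℝ, 0 < c ∧ ∀ n : ℕ, 2 ≤ n →
      c * (n : ℝ) ^ (a + b + 1) ≤
        ∑ i ∈ Ico 1 n, (i : ℝ) ^ a * ((n - i : ℕ) : ℝ) ^ b := by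
  set ka := min 1 ((4 : ℝ)⁻¹ ^ a)
  set kb := min 1 ((4 : ℝ)⁻¹ ^ b)
  refine ⟨ka * kb / 8, by positivity, fun n hn ↦ ?_⟩
  have hnR : (0 : ℝ) < n := by exact_mod_cast (by omega : 0 < n)
  have hcard : (n : ℝ) / 8 ≤ #(Ioc (n / 4) (n / 2)) := by
    have : (n : ℝ) ≤ 8 * ((n / 2 - n / 4 : ℕ) : ℝ) := by
      exact_mod_cast (by omega : n ≤ 8 * (n / 2 - n / 4))
    rw [Nat.card_Ioc]
    linarith
  have hterm : ∀ i ∈ Ioc (n / 4) (n / 2),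
      ka * (n : ℝ) ^ a * (kb * (n : ℝ) ^ b) ≤ (i : ℝ) ^ a * ((n - i : ℕ) : ℝ) ^ b := by
    intro i hi
    obtain ⟨hi₁, hi₂⟩ := mem_Ioc.mp hi
    have h4i : (n : ℝ) ≤ 4 * i := by exact_mod_cast (by omega : n ≤ 4 * i)
    have h2i : 2 * (i : ℝ) ≤ n := by exact_mod_cast (by omega : 2 * i ≤ n)
    rw [Nat.cast_sub (by omega)]
    exact mul_le_mul
      (min_one_rpow_mul_rpow_le_rpow (by norm_num) hnR (by linarith) (by linarith))
      (min_one_rpow_mul_rpow_le_rpow (by norm_num) hnR (by linarith) (by linarith))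
      (by positivity) (by positivity)
  calc ka * kb / 8 * (n : ℝ) ^ (a + b + 1)
      = (n : ℝ) / 8 * (ka * (n : ℝ) ^ a * (kb * (n : ℝ) ^ b)) := by
        rw [Real.rpow_add_one hnR.ne', Real.rpow_add hnR]
        ring
    _ ≤ #(Ioc (n / 4) (n / 2)) * (ka * (n : ℝ) ^ a * (kb * (n : ℝ) ^ b)) := by gcongr
    _ ≤ ∑ i ∈ Ioc (n / 4) (n / 2), (i : ℝ) ^ a * ((n - i : ℕ) : ℝ) ^ b := by
        rw [← nsmul_eq_mul]
        exact card_nsmul_le_sum _ _ _ hterm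
    _ ≤ _ := sum_le_sum_of_subset_of_nonneg
        (fun i hi ↦ by simp only [mem_Ioc, mem_Ico] at hi ⊢; omega) fun _ _ _ ↦ by positivity

/-- For `min a₁ a₂ > -1`, `∑_{n₁+n₂=n, n₁,n₂ ≥ 1} n₁^{a₁} n₂^{a₂} = Θ(n^{a₁+a₂+1})`. -/
theorem sum_rpow_mul_rpow_isTheta_of_neg_one_lt (a₁ a₂ : ℝ) (h : -1 < min a₁ a₂) :
    ∃ c C : ℝ, 0 < c ∧ 0 < C ∧ ∀ᶠ n : ℕ in atTop,
      c * (n : ℝ) ^ (a₁ + a₂ + 1) ≤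
          ∑ i ∈ Finset.Ico 1 n, (i : ℝ) ^ a₁ * ((n - i : ℕ) : ℝ) ^ a₂ ∧
        ∑ i ∈ Finset.Ico 1 n, (i : ℝ) ^ a₁ * ((n - i : ℕ) : ℝ) ^ a₂ ≤
          C * (n : ℝ) ^ (a₁ + a₂ + 1) := by
  obtain ⟨ha₁, ha₂⟩ := lt_min_iff.mp h
  obtain ⟨c, hc, lower⟩ := exists_le_sum_rpow_mul_rpow a₁ a₂
  obtain ⟨C, hC, upper⟩ := exists_sum_rpow_mul_rpow_le ha₁ ha₂
  refine ⟨c, C, hc, hC, ?_⟩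
  filter_upwards [eventually_ge_atTop 2] with n hn
  exact ⟨lower n hn, upper n (by omega)⟩
end

section
/- Let a_1, a_2 be real numbers with min(a_1,a_2) < -1. Then for large n, the sum over pairs of positive integers n_1 + n_2 = n of n_1^{a_1} * n_2^{a_2} is Theta(n^{max(a_1,a_2)}). -/
open Filter

/-! For `b ≤ a`, the larger of `i` and `n - i` lies in `[n / 2, n]`, so each term `i ^ a (n - i) ^ b`
is at most a constant times `n ^ a (i ^ b + (n - i) ^ b)`; for `b < -1` the sum is then bounded by
`n ^ a` times twice the convergent series `∑ i ^ b`. The single term `i = n - 1` gives the lower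
bound, and the symmetry `i ↦ n - i` reduces the case `a < b` to this one. -/

theorem Finset.sum_Ico_one_sub_comm {M : Type*} [AddCommMonoid M] (g : ℕ → ℕ → M) (n : ℕ) :
    ∑ i ∈ Finset.Ico 1 n, g i (n - i) = ∑ i ∈ Finset.Ico 1 n, g (n - i) i := by
  refine Finset.sum_nbij' (n - ·) (n - ·) ?_ ?_ ?_ ?_ ?_ <;> intro i hi <;>
    simp only [Finset.mem_Ico] at hi ⊢
  all_goals first | omega | rw [Nat.sub_sub_self (by omega)]

namespace Real

variable {x y : ℝ}

theorem rpow_le_max_one_mul_rpow_of_half_le (a : ℝ) (hx : 0 < x) (hxy : x / 2 ≤ y)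
    (hyx : y ≤ x) : y ^ a ≤ max 1 (2 ^ (-a)) * x ^ a := by
  rcases le_total 0 a with ha | ha
  · exact (rpow_le_rpow (by linarith) hyx ha).trans
      (le_mul_of_one_le_left (by positivity) (le_max_left _ _))
  · calc y ^ a ≤ (x / 2) ^ a := rpow_le_rpow_of_nonpos (by positivity) hxy ha
      _ = 2 ^ (-a) * x ^ a := by
        rw [div_rpow hx.le zero_le_two, rpow_neg zero_le_two, div_eq_inv_mul]
      _ ≤ max 1 (2 ^ (-a)) * x ^ a := by gcongr; exact le_max_right _ _

theorem min_one_mul_rpow_le_rpow_of_half_le (a : ℝ) (hx : 0 < x) (hxy : x / 2 ≤ y)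
    (hyx : y ≤ x) : min 1 (2 ^ (-a)) * x ^ a ≤ y ^ a := by
  rcases le_total 0 a with ha | ha
  · calc min 1 (2 ^ (-a)) * x ^ a ≤ 2 ^ (-a) * x ^ a := by gcongr; exact min_le_right _ _
      _ = (x / 2) ^ a := by
        rw [div_rpow hx.le zero_le_two, rpow_neg zero_le_two, div_eq_inv_mul]
      _ ≤ y ^ a := rpow_le_rpow (by positivity) hxy ha
  · exact (mul_le_of_le_one_left (by positivity) (min_le_left _ _)).trans
      (rpow_le_rpow_of_nonpos (by linarith) hyx ha)

/-- If `x ≤ y`, then `(x / y) ^ (a - b) ≤ 1` moves the larger exponent onto the larger variable. -/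
theorem rpow_mul_rpow_le {a b : ℝ} (hx : 0 < x) (hy : 0 < y) (hba : b ≤ a) :
    x ^ a * y ^ b ≤ max 1 (2 ^ (-a)) * (x + y) ^ a * (x ^ b + y ^ b) := by
  have hxb : 0 ≤ x ^ b := by positivity
  have hyb : 0 ≤ y ^ b := by positivity
  rcases le_total y x with h | h
  · calc x ^ a * y ^ b ≤ max 1 (2 ^ (-a)) * (x + y) ^ a * y ^ b := by
          gcongr
          exact rpow_le_max_one_mul_rpow_of_half_le a (by positivity) (by linarith) (by linarith)
      _ ≤ _ := by gcongr; linarith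
  · have hswap : x ^ a * y ^ b ≤ y ^ a * x ^ b := by
      have : x ^ (a - b) ≤ y ^ (a - b) := rpow_le_rpow hx.le h (by linarith)
      rw [rpow_sub hx, rpow_sub hy] at this
      rw [div_le_div_iff₀ (by positivity) (by positivity)] at this
      nlinarith [this]
    calc x ^ a * y ^ b ≤ y ^ a * x ^ b := hswap
      _ ≤ max 1 (2 ^ (-a)) * (x + y) ^ a * x ^ b := by
          gcongr
          exact rpow_le_max_one_mul_rpow_of_half_le a (by positivity) (by linarith) (by linarith)
      _ ≤ _ := by gcongr; linarith

end Real

/-- `∑_{n₁ + n₂ = n, n₁, n₂ ≥ 1} n₁ ^ a * n₂ ^ b`. -/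
noncomputable def rpowConvolution (a b : ℝ) (n : ℕ) : ℝ :=
  ∑ i ∈ Finset.Ico 1 n, (i : ℝ) ^ a * ((n - i : ℕ) : ℝ) ^ b

namespace rpowConvolution

theorem comm (a b : ℝ) (n : ℕ) : rpowConvolution a b n = rpowConvolution b a n := by
  rw [rpowConvolution, rpowConvolution,
    Finset.sum_Ico_one_sub_comm (fun i j => (i : ℝ) ^ a * (j : ℝ) ^ b)]
  exact Finset.sum_congr rfl fun _ _ => mul_comm _ _

theorem min_one_mul_rpow_le (a b : ℝ) {n : ℕ} (hn : 2 ≤ n) :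
    min 1 (2 ^ (-a)) * (n : ℝ) ^ a ≤ rpowConvolution a b n := by
  have hmem : n - 1 ∈ Finset.Ico 1 n := Finset.mem_Ico.mpr ⟨by omega, by omega⟩
  have hn' : (2 : ℝ) ≤ n := by exact_mod_cast hn
  calc min 1 (2 ^ (-a)) * (n : ℝ) ^ a ≤ ((n - 1 : ℕ) : ℝ) ^ a := by
        apply Real.min_one_mul_rpow_le_rpow_of_half_le a (by positivity) <;>
          push_cast [Nat.cast_sub (by omega : 1 ≤ n)] <;> linarith
    _ = ((n - 1 : ℕ) : ℝ) ^ a * ((n - (n - 1) : ℕ) : ℝ) ^ b := by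
        rw [Nat.sub_sub_self (by omega)]; simp
    _ ≤ rpowConvolution a b n :=
        Finset.single_le_sum (f := fun i : ℕ => (i : ℝ) ^ a * ((n - i : ℕ) : ℝ) ^ b)
          (fun i _ => by positivity) hmem

theorem le_mul_rpow {a b : ℝ} (hb : b < -1) (hba : b ≤ a) (n : ℕ) :
    rpowConvolution a b n ≤ 2 * max 1 (2 ^ (-a)) * (∑' i : ℕ, (i : ℝ) ^ b) * (n : ℝ) ^ a := by
  have hpointwise : ∀ i ∈ Finset.Ico 1 n, (i : ℝ) ^ a * ((n - i : ℕ) : ℝ) ^ b ≤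
      max 1 (2 ^ (-a)) * (n : ℝ) ^ a * ((i : ℝ) ^ b + ((n - i : ℕ) : ℝ) ^ b) := by
    intro i hi
    obtain ⟨h1i, hin⟩ := Finset.mem_Ico.mp hi
    have := Real.rpow_mul_rpow_le (x := i) (y := (n - i : ℕ)) (by positivity)
      (by simp only [Nat.cast_pos]; omega) hba
    rwa [← Nat.cast_add, Nat.add_sub_cancel' hin.le] at this
  have hpartial : ∑ i ∈ Finset.Ico 1 n, (i : ℝ) ^ b ≤ ∑' i : ℕ, (i : ℝ) ^ b :=
    (Real.summable_nat_rpow.mpr hb).sum_le_tsum _ fun i _ => by positivity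
  calc rpowConvolution a b n
      ≤ ∑ i ∈ Finset.Ico 1 n,
          max 1 (2 ^ (-a)) * (n : ℝ) ^ a * ((i : ℝ) ^ b + ((n - i : ℕ) : ℝ) ^ b) :=
        Finset.sum_le_sum hpointwise
    _ = 2 * max 1 (2 ^ (-a)) * (∑ i ∈ Finset.Ico 1 n, (i : ℝ) ^ b) * (n : ℝ) ^ a := by
        rw [← Finset.mul_sum, Finset.sum_add_distrib,
          ← Finset.sum_Ico_one_sub_comm (fun _ j => (j : ℝ) ^ b)]
        ring
    _ ≤ _ := by gcongr

end rpowConvolution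

/-- For `min a₁ a₂ < -1`, `∑_{n₁+n₂=n, n₁,n₂ ≥ 1} n₁^{a₁} n₂^{a₂} = Θ(n^{max a₁ a₂})`. -/
theorem sum_rpow_mul_rpow_isTheta_of_lt_neg_one (a₁ a₂ : ℝ) (h : min a₁ a₂ < -1) :
    ∃ c C : ℝ, 0 < c ∧ 0 < C ∧ ∀ᶠ n : ℕ in atTop,
      c * (n : ℝ) ^ (max a₁ a₂) ≤
          ∑ i ∈ Finset.Ico 1 n, (i : ℝ) ^ a₁ * ((n - i : ℕ) : ℝ) ^ a₂ ∧
        ∑ i ∈ Finset.Ico 1 n, (i : ℝ) ^ a₁ * ((n - i : ℕ) : ℝ) ^ a₂ ≤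
          C * (n : ℝ) ^ (max a₁ a₂) := by
  wlog h21 : a₂ ≤ a₁ generalizing a₁ a₂
  · obtain ⟨c, C, hc, hC, hbounds⟩ := this a₂ a₁ (by rwa [min_comm]) (le_of_not_ge h21)
    refine ⟨c, C, hc, hC, hbounds.mono fun n hn => ?_⟩
    have hcomm := rpowConvolution.comm a₂ a₁ n
    unfold rpowConvolution at hcomm
    rwa [hcomm, max_comm] at hn
  rw [min_eq_right h21] at h
  have hZ : 0 < ∑' i : ℕ, (i : ℝ) ^ a₂ :=
    (Real.summable_nat_rpow.mpr h).tsum_pos (fun i => by positivity) 1 (by simp)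
  refine ⟨min 1 (2 ^ (-a₁)), 2 * max 1 (2 ^ (-a₁)) * ∑' i : ℕ, (i : ℝ) ^ a₂, by positivity,
    by positivity, eventually_atTop.mpr ⟨2, fun n hn => ?_⟩⟩
  rw [max_eq_left h21]
  exact ⟨rpowConvolution.min_one_mul_rpow_le a₁ a₂ hn, rpowConvolution.le_mul_rpow h h21 n⟩
end

section
/- For any sequence p of m open parentheses and n close parentheses with m > n, among the distinct cyclic permutations of p, the proportion of dominating sequences (sequences in which every nonempty prefix contains strictly more open than close parentheses) is exactly (m-n)/(m+n). -/
/-!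
Read `true` as a step `+1` and `false` as `-1`, and let `c` be the walk of the periodic word
`p p p …`: it rises by at most one per step and gains `δ = m - n` per period `L = m + n`.
The rotation `p.rotate i` is dominating exactly when `c i < c t` for all `t > i`. Such times
are the last visits of `c` to the values at or above its minimum `B`, and those in one period
are exactly the last visits to `B, B + 1, …, B + δ - 1` (cycle lemma). Finally, every distinct
rotation arises from the same number `k` of shifts `i < L`, so `L` and `δ` are `k` times the
numbers of distinct rotations and of distinct dominating rotations.
-/

/-- A parenthesis sequence (`true` = open, `false` = close) is dominating if every
nonempty prefix contains strictly more open than close parentheses. -/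
def Dominating (q : List Bool) : Prop :=
  ∀ k ∈ Finset.Icc 1 q.length, (q.take k).count false < (q.take k).count true

instance : DecidablePred Dominating := fun q =>
  inferInstanceAs (Decidable (∀ k ∈ Finset.Icc 1 q.length, _ < _))

open Finset Filter

lemma Finset.card_filter_comp_eq_mul {ι β : Type*} [DecidableEq β] (f : ι → β) (s : Finset ι)
    (P : β → Prop) [DecidablePred P] {k : ℕ} (hk : ∀ b ∈ s.image f, #{a ∈ s | f a = b} = k) :
    #{a ∈ s | P (f a)} = #{b ∈ s.image f | P b} * k := by
  rw [card_eq_sum_card_fiberwise (t := {b ∈ s.image f | P b}) fun a ha => by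
    rw [mem_coe, mem_filter] at ha ⊢
    exact ⟨mem_image_of_mem f ha.1, ha.2⟩]
  refine sum_const_nat fun b hb => ?_
  obtain ⟨hb, hPb⟩ := mem_filter.1 hb
  rw [filter_filter, ← hk b hb]
  congr 1
  exact filter_congr fun a _ => and_iff_right_of_imp fun hab => hab ▸ hPb

lemma List.rotate_eq_rotate_iff_rotate_mod_eq {α : Type*} {l : List α} {i j : ℕ}
    (hj : j ≤ l.length) :
    l.rotate i = l.rotate j ↔ l.rotate ((i + (l.length - j)) % l.length) = l := by
  rw [← List.rotate_eq_rotate (n := l.length - j), List.rotate_rotate, List.rotate_rotate,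
    Nat.add_sub_cancel' hj, List.rotate_length, List.rotate_mod]

lemma List.card_filter_rotate_eq_rotate {α : Type*} [DecidableEq α] (l : List α) {j : ℕ}
    (hj : j < l.length) :
    #{i ∈ Finset.range l.length | l.rotate i = l.rotate j} =
      #{i ∈ Finset.range l.length | l.rotate i = l} := by
  set L := l.length
  refine card_bij' (fun i _ => (i + (L - j)) % L) (fun i _ => (i + j) % L) (fun i hi => ?_)
    (fun i hi => ?_) (fun i hi => ?_) (fun i hi => ?_)
  · rw [Finset.mem_filter, Finset.mem_range] at hi ⊢
    exact ⟨Nat.mod_lt _ (by omega), (rotate_eq_rotate_iff_rotate_mod_eq hj.le).1 hi.2⟩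
  · rw [Finset.mem_filter, Finset.mem_range] at hi ⊢
    refine ⟨Nat.mod_lt _ (by omega), ?_⟩
    rw [rotate_mod, ← rotate_rotate, hi.2]
  · rw [Finset.mem_filter, Finset.mem_range] at hi
    rw [Nat.mod_add_mod, show i + (L - j) + j = i + L by omega, Nat.add_mod_right,
      Nat.mod_eq_of_lt hi.1]
  · rw [Finset.mem_filter, Finset.mem_range] at hi
    rw [Nat.mod_add_mod, show i + j + (L - j) = i + L by omega, Nat.add_mod_right,
      Nat.mod_eq_of_lt hi.1]

lemma List.card_filter_rotate {α : Type*} [DecidableEq α] (l : List α) (P : List α → Prop)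
    [DecidablePred P] :
    #{i ∈ Finset.range l.length | P (l.rotate i)} =
      #{q ∈ (Finset.range l.length).image l.rotate | P q} *
        #{i ∈ Finset.range l.length | l.rotate i = l} :=
  card_filter_comp_eq_mul _ _ P fun q hq => by
    obtain ⟨j, hj, rfl⟩ := Finset.mem_image.1 hq
    exact l.card_filter_rotate_eq_rotate (Finset.mem_range.1 hj)

section Walk

variable {c : ℕ → ℤ}

def IsStrictFutureMin (c : ℕ → ℤ) (i : ℕ) : Prop := ∀ t, i < t → c i < c t

lemma IsStrictFutureMin.injOn : Set.InjOn c {i | IsStrictFutureMin c i} := by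
  intro i hi j hj hij
  by_contra hne
  rcases Nat.lt_or_gt_of_ne hne with h | h
  · exact (hi j h).ne hij
  · exact (hj i h).ne hij.symm

lemma exists_eq_of_le_of_le_of_step_le_one (hstep : ∀ t, c (t + 1) ≤ c t + 1)
    {a b : ℕ} (hab : a ≤ b) {v : ℤ} (ha : c a ≤ v) (hb : v ≤ c b) :
    ∃ t, a ≤ t ∧ t ≤ b ∧ c t = v := by
  induction hab using Nat.decreasingInduction with
  | self => exact ⟨b, le_rfl, le_rfl, le_antisymm ha hb⟩
  | of_succ a hab ih =>
    rcases ha.lt_or_eq with ha | ha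
    · obtain ⟨t, hat, htb, ht⟩ := ih (by linarith [hstep a])
      exact ⟨t, by omega, htb, ht⟩
    · exact ⟨a, le_rfl, hab.le, ha⟩

variable (hstep : ∀ t, c (t + 1) ≤ c t + 1) (hc : Tendsto c atTop atTop)
include hstep hc

lemma isStrictFutureMin_of_forall_ne {i : ℕ} (hi : ∀ t, i < t → c t ≠ c i) :
    IsStrictFutureMin c i := by
  intro t hit
  by_contra! hle
  obtain ⟨N, hN⟩ := eventually_atTop.1 (hc.eventually_gt_atTop (c i))
  obtain ⟨s, hts, -, hs⟩ :=
    exists_eq_of_le_of_le_of_step_le_one hstep (le_max_left t N) hle (hN _ (le_max_right t N)).le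
  exact hi s (hit.trans_le hts) hs

lemma exists_isStrictFutureMin_eq {a : ℕ} {v : ℤ} (hv : c a ≤ v) :
    ∃ i, IsStrictFutureMin c i ∧ c i = v := by
  obtain ⟨N, hN⟩ := eventually_atTop.1 (hc.eventually_gt_atTop v)
  obtain ⟨t, -, htN, ht⟩ :=
    exists_eq_of_le_of_le_of_step_le_one hstep (le_max_left a N) hv (hN _ (le_max_right a N)).le
  have hlast : c (Nat.findGreatest (c · = v) (max a N)) = v :=
    Nat.findGreatest_spec (P := (c · = v)) htN ht
  refine ⟨_, isStrictFutureMin_of_forall_ne hstep hc fun s hs => ?_, hlast⟩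
  rw [hlast]
  rcases le_or_gt s (max a N) with hsN | hsN
  · exact Nat.findGreatest_is_greatest hs hsN
  · exact (hN s (le_of_max_le_right hsN.le)).ne'

end Walk

section Periodic

variable {c : ℕ → ℤ} {L δ : ℕ} (hL : 0 < L) (hper : ∀ t, c (t + L) = c t + δ)
include hL hper

lemma le_apply_of_forall_lt_period {B : ℤ} (hB : ∀ s < L, B ≤ c s) (t : ℕ) :
    B + (t / L : ℕ) * δ ≤ c t := by
  induction t using Nat.strong_induction_on with
  | _ t ih =>
    rcases lt_or_ge t L with htL | hLt
    · simpa [Nat.div_eq_of_lt htL] using hB t htL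
    · obtain ⟨s, rfl⟩ := Nat.exists_eq_add_of_le' hLt
      rw [hper, Nat.add_div_right s hL, Nat.cast_succ]
      linarith [ih s (by omega)]

lemma tendsto_atTop_of_periodic (hδ : 0 < δ) : Tendsto c atTop atTop := by
  obtain ⟨s₀, -, hmin⟩ := exists_min_image (range L) c (nonempty_range_iff.2 hL.ne')
  have hlow := le_apply_of_forall_lt_period hL hper fun s hs => hmin s (mem_range.2 hs)
  refine tendsto_atTop_mono' atTop (Eventually.of_forall hlow) ?_
  refine tendsto_atTop_add_const_left _ _ (tendsto_natCast_atTop_atTop.comp ?_)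
  exact (Nat.tendsto_div_const_atTop hL.ne').atTop_mul_const' hδ

lemma isStrictFutureMin_iff_of_periodic (i : ℕ) :
    IsStrictFutureMin c i ↔ ∀ k ∈ Icc 1 L, c i < c (i + k) := by
  refine ⟨fun h k hk => h _ (by grind), fun h t hit => ?_⟩
  induction t using Nat.strong_induction_on with
  | _ t ih =>
    rcases le_or_gt t (i + L) with htL | htL
    · simpa [show i + (t - i) = t by omega] using h (t - i) (mem_Icc.2 ⟨by omega, by omega⟩)
    · obtain ⟨s, rfl⟩ := Nat.exists_eq_add_of_le' (show L ≤ t by omega)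
      rw [hper]
      linarith [ih s (by omega) (by omega)]

theorem card_filter_isStrictFutureMin [DecidablePred (IsStrictFutureMin c)] (hδ : 0 < δ)
    (hstep : ∀ t, c (t + 1) ≤ c t + 1) : #{i ∈ range L | IsStrictFutureMin c i} = δ := by
  obtain ⟨s₀, -, hmin⟩ := exists_min_image (range L) c (nonempty_range_iff.2 hL.ne')
  have hlow (t : ℕ) : c s₀ ≤ c t := by
    have := le_apply_of_forall_lt_period hL hper (fun s hs => hmin s (mem_range.2 hs)) t
    have : (0 : ℤ) ≤ (t / L : ℕ) * δ := by positivity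
    linarith
  have hc := tendsto_atTop_of_periodic hL hper hδ
  calc #{i ∈ range L | IsStrictFutureMin c i} = #(Ico (c s₀) (c s₀ + δ)) := by
        refine card_bij (fun i _ => c i) (fun i hi => ?_) (fun i hi j hj hij => ?_) fun v hv => ?_
        · obtain ⟨hiL, hi⟩ := mem_filter.1 hi
          refine mem_Ico.2 ⟨hlow i, ?_⟩
          rcases lt_or_ge i s₀ with his | his
          · linarith [hi s₀ his]
          · linarith [hi (s₀ + L) (by grind), hper s₀]
        · exact IsStrictFutureMin.injOn (mem_filter.1 hi).2 (mem_filter.1 hj).2 hij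
        · obtain ⟨hv₀, hvδ⟩ := mem_Ico.1 hv
          obtain ⟨j, hj, rfl⟩ := exists_isStrictFutureMin_eq hstep hc hv₀
          refine ⟨j, mem_filter.2 ⟨mem_range.2 ?_, hj⟩, rfl⟩
          by_contra! hLj
          obtain ⟨s, rfl⟩ := Nat.exists_eq_add_of_le' hLj
          linarith [hlow s, hper s]
    _ = δ := by simp

end Periodic

def excess (l : List Bool) : ℤ := l.count true - l.count false

lemma excess_append (l₁ l₂ : List Bool) : excess (l₁ ++ l₂) = excess l₁ + excess l₂ := by
  simp only [excess, List.count_append]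
  push_cast
  ring

lemma excess_rotate (l : List Bool) (i : ℕ) : excess (l.rotate i) = excess l := by
  simp only [excess, (l.rotate_perm i).count_eq]

lemma excess_take_one_le (l : List Bool) : excess (l.take 1) ≤ 1 := by
  have := (l.take 1).count_le_length (a := true)
  have := l.length_take_le 1
  simp only [excess]
  omega

/-- `(p.rotate j).take 1` is the `j`-th letter of the periodic word `p p p …`. -/
def walk (p : List Bool) (t : ℕ) : ℤ := ∑ j ∈ range t, excess ((p.rotate j).take 1)

lemma walk_succ_le (p : List Bool) (t : ℕ) : walk p (t + 1) ≤ walk p t + 1 := by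
  simp only [walk, sum_range_succ]
  linarith [excess_take_one_le (p.rotate t)]

lemma walk_rotate (p : List Bool) (i k : ℕ) : walk (p.rotate i) k = walk p (i + k) - walk p i := by
  simp only [walk, sum_range_add, List.rotate_rotate, add_sub_cancel_left]

lemma walk_eq_excess_take {l : List Bool} {k : ℕ} (hk : k ≤ l.length) :
    walk l k = excess (l.take k) := by
  induction k with
  | zero => simp [walk, excess]
  | succ k ih =>
    rw [walk, sum_range_succ, ← walk, ih (by omega), List.take_add, excess_append,
      List.rotate_eq_drop_append_take (by omega), List.take_append_of_le_length (by simp; omega)]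

lemma walk_add_length (p : List Bool) (t : ℕ) : walk p (t + p.length) = walk p t + excess p := by
  have h := walk_rotate p t p.length
  rw [walk_eq_excess_take (by simp), List.take_of_length_le (by simp), excess_rotate] at h
  linarith

lemma dominating_rotate_iff (p : List Bool) (i : ℕ) :
    Dominating (p.rotate i) ↔ ∀ k ∈ Icc 1 p.length, walk p i < walk p (i + k) := by
  rw [Dominating, List.length_rotate]
  refine forall₂_congr fun k hk => ?_
  rw [← sub_pos (a := walk p (i + k)), ← walk_rotate, walk_eq_excess_take (by simp; grind),
    excess, sub_pos, Nat.cast_lt]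

/-- Cycle lemma ratio: for a sequence of `m` open and `n` close parentheses with
`m > n`, among the distinct cyclic permutations the proportion of dominating
sequences is `(m-n)/(m+n)`. -/
theorem cycle_lemma_ratio (p : List Bool) (m n : ℕ)
    (hm : p.count true = m) (hn : p.count false = n) (hmn : n < m) :
    (((Finset.range p.length).image (fun i => p.rotate i)).filter Dominating).card *
        (m + n) =
      (m - n) * ((Finset.range p.length).image (fun i => p.rotate i)).card := by
  classical
  have hlen : p.length = m + n := by rw [← hm, ← hn, List.count_true_add_count_false]
  have hper (t : ℕ) : walk p (t + p.length) = walk p t + (m - n : ℕ) := by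
    rw [walk_add_length, excess, hm, hn, Nat.cast_sub hmn.le]
  have hdom : #{i ∈ range p.length | Dominating (p.rotate i)} = m - n := by
    have hL : 0 < p.length := by omega
    rw [filter_congr fun i _ => (dominating_rotate_iff p i).trans
      (isStrictFutureMin_iff_of_periodic hL hper i).symm]
    exact card_filter_isStrictFutureMin hL hper (by omega) (walk_succ_le p)
  have hall := p.card_filter_rotate fun _ => True
  have hgood := p.card_filter_rotate Dominating
  simp only [filter_true, card_range] at hall
  rw [hdom] at hgood
  rw [← hlen, hgood]
  exact (congrArg _ hall).trans (by ring)
end
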